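/- arXiv:1805.03284 — 2 statements merged into one kernel-verified Lean document; each statement's English description precedes it below -/
import Mathlib

section
/- Let 𝒜 be a positively irreducible finite set of nonnegative n×n matrices and T^d the depth-d De Bruijn operator. Then r(T^d) ≤ n^{1/(d+1)} · ρ(𝒜). In particular, r(T^d) → ρ(𝒜) as d → ∞. -/
open Matrix Filter

/-- Transition map of the De Bruijn automaton of depth `d` on `p` symbols. -/
def deBruijnShift {p : ℕ} (d : ℕ) (r : Fin d → Fin p) (a : Fin p) : Fin d → Fin p :=
  fun i => if h : (i : ℕ) + 1 < d then r ⟨(i : ℕ) + 1, h⟩ else a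

/-- The depth-`d` operator of the hierarchy, on the product cone encoded on the
index type `(Fin d → Fin p) × Fin n`. -/
noncomputable def deBruijnOp {n p : ℕ} (A : Fin p → Matrix (Fin n) (Fin n) ℝ) (d : ℕ)
    (x : (Fin d → Fin p) × Fin n → ℝ) : (Fin d → Fin p) × Fin n → ℝ :=
  fun q => ⨆ ra : {ra : (Fin d → Fin p) × Fin p // deBruijnShift d ra.1 ra.2 = q.1},
    (A ra.1.2)ᵀ.mulVec (fun j => x (ra.1.1, j)) q.2

/-- The (nonlinear) spectral radius, via the Collatz–Wielandt formula. -/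
noncomputable def cwRadius {ι : Type*} [Fintype ι] (f : (ι → ℝ) → (ι → ℝ)) : ℝ :=
  sInf {ρ : ℝ | 0 < ρ ∧ ∃ u : ι → ℝ, (∀ i, 0 < u i) ∧ f u ≤ ρ • u}

/-- Positive irreducibility of a family of nonnegative matrices. -/
def PosIrredFamily {n p : ℕ} (A : Fin p → Matrix (Fin n) (Fin n) ℝ) : Prop :=
  ∀ I : Set (Fin n), I.Nonempty → I ≠ Set.univ →
    ¬ (∀ (a : Fin p) (x : Fin n → ℝ), (0 ≤ x ∧ ∀ i ∉ I, x i = 0) →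
        (0 ≤ (A a).mulVec x ∧ ∀ i ∉ I, (A a).mulVec x i = 0))

/-!
Lower bound: if `T^d u ≤ c • u` with `u > 0`, following the De Bruijn automaton along a word `w`
gives `u_r A_w ≤ c^|w| u_s` for some state `s`, so all entries of `A_w` are `O(c^|w|)` and `ρ ≤ c`.

Upper bound: for `λ > ρ` all products of length at least some `K` have entries at most `λ^k`, so
the vector `v` of maximal entries of `A_w / λ^|w|` over words of length at most `K` dominates
`A_w / λ^|w|` for every word and satisfies `v A_b ≤ n λ^|b| v`. With `μ = n^{1/(d+1)} λ`, the
vector `u_r = ∑_{ℓ ≤ d} μ^{-ℓ} v A_{suffix_ℓ r}` satisfies `T^d u ≤ μ u`: the shift turns the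
suffix of length `ℓ` into the suffix of length `ℓ + 1` of the new state, and the term of
length `d + 1` that falls off is absorbed by the `ℓ = 0` term `v`, since `μ^{d+1} = n λ^{d+1}`.
Squeezing `ρ ≤ r(T^d) ≤ n^{1/(d+1)} ρ` gives the limit.
-/

open scoped Topology

noncomputable section

section Words

variable {M : Type*} [Monoid M] {p : ℕ} (A : Fin p → M)

def wordProd {k : ℕ} (w : Fin k → Fin p) : M :=
  (List.ofFn fun j => A (w j)).prod

@[simp]
lemma wordProd_zero (w : Fin 0 → Fin p) : wordProd A w = 1 := by
  simp [wordProd]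

lemma wordProd_snoc {k : ℕ} (w : Fin k → Fin p) (a : Fin p) :
    wordProd A (Fin.snoc w a) = wordProd A w * A a := by
  rw [wordProd, List.ofFn_succ']
  simp [wordProd]

lemma wordProd_succ {k : ℕ} (w : Fin (k + 1) → Fin p) :
    wordProd A w = wordProd A (Fin.init w) * A (w (Fin.last k)) := by
  rw [← wordProd_snoc, Fin.snoc_init_self]

lemma wordProd_append {k l : ℕ} (w : Fin k → Fin p) (b : Fin l → Fin p) :
    wordProd A (Fin.append w b) = wordProd A w * wordProd A b := by
  have hcomp : (fun j => A (Fin.append w b j)) =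
      Fin.append (fun j => A (w j)) fun j => A (b j) := by
    funext t
    refine Fin.addCases (fun t => ?_) (fun t => ?_) t <;> simp
  rw [wordProd, hcomp, List.ofFn_fin_append, List.prod_append, wordProd, wordProd]

end Words

section Nonneg

variable {ι : Type*} [Fintype ι] {M : Matrix ι ι ℝ}

lemma vecMul_le_vecMul_of_nonneg (hM : ∀ i j, 0 ≤ M i j) {x y : ι → ℝ} (hxy : x ≤ y) :
    x ᵥ* M ≤ y ᵥ* M :=
  fun i => Finset.sum_le_sum fun j _ => mul_le_mul_of_nonneg_right (hxy j) (hM j i)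

lemma vecMul_nonneg (hM : ∀ i j, 0 ≤ M i j) {x : ι → ℝ} (hx : 0 ≤ x) : 0 ≤ x ᵥ* M := by
  simpa using vecMul_le_vecMul_of_nonneg hM hx

lemma mul_le_vecMul_apply (hM : ∀ i j, 0 ≤ M i j) {x : ι → ℝ} (hx : 0 ≤ x) (j i : ι) :
    x j * M j i ≤ (x ᵥ* M) i :=
  Finset.single_le_sum (f := fun t => x t * M t i) (fun t _ => mul_nonneg (hx t) (hM t i))
    (Finset.mem_univ j)

lemma wordProd_nonneg [DecidableEq ι] {p : ℕ} {A : Fin p → Matrix ι ι ℝ}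
    (hA : ∀ a i j, 0 ≤ A a i j) : ∀ {k : ℕ} (w : Fin k → Fin p) (i j : ι), 0 ≤ wordProd A w i j
  | 0, w, i, j => by
    rw [wordProd_zero, Matrix.one_apply]
    split_ifs <;> norm_num
  | k + 1, w, i, j => by
    rw [wordProd_succ]
    exact vecMul_nonneg (hA _) (fun t => wordProd_nonneg hA _ i t) j

end Nonneg

section MaxAbsEntry

variable {ι : Type*}

def maxAbsEntry (M : Matrix ι ι ℝ) : ℝ := ⨆ i, ⨆ j, |M i j|

lemma abs_le_maxAbsEntry [Finite ι] (M : Matrix ι ι ℝ) (i j : ι) : |M i j| ≤ maxAbsEntry M :=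
  (le_ciSup (Finite.bddAbove_range _) j).trans
    (le_ciSup (Finite.bddAbove_range fun i => ⨆ j, |M i j|) i)

lemma maxAbsEntry_le {M : Matrix ι ι ℝ} {b : ℝ} (hb : 0 ≤ b) (h : ∀ i j, |M i j| ≤ b) :
    maxAbsEntry M ≤ b :=
  Real.iSup_le (fun i => Real.iSup_le (h i) hb) hb

lemma maxAbsEntry_nonneg (M : Matrix ι ι ℝ) : 0 ≤ maxAbsEntry M :=
  Real.iSup_nonneg fun _ => Real.iSup_nonneg fun _ => abs_nonneg _

end MaxAbsEntry

section JointSpectralRadius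

variable {ι : Type*} [Fintype ι] [DecidableEq ι] {p : ℕ}

def jsrApprox (A : Fin p → Matrix ι ι ℝ) (k : ℕ) : ℝ :=
  ⨆ w : Fin k → Fin p, maxAbsEntry (wordProd A w) ^ ((1 : ℝ) / k)

lemma jsrApprox_nonneg (A : Fin p → Matrix ι ι ℝ) (k : ℕ) : 0 ≤ jsrApprox A k :=
  Real.iSup_nonneg fun _ => Real.rpow_nonneg (maxAbsEntry_nonneg _) _

variable {A : Fin p → Matrix ι ι ℝ} {ρ : ℝ}

lemma nonneg_of_tendsto_jsrApprox (hρ : Tendsto (jsrApprox A) atTop (𝓝 ρ)) : 0 ≤ ρ :=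
  ge_of_tendsto' hρ (jsrApprox_nonneg A)

lemma eventually_abs_wordProd_le (hρ : Tendsto (jsrApprox A) atTop (𝓝 ρ)) {c : ℝ}
    (hc : ρ < c) :
    ∀ᶠ k in atTop, ∀ (w : Fin k → Fin p) (i j : ι), |wordProd A w i j| ≤ c ^ k := by
  filter_upwards [hρ.eventually (gt_mem_nhds hc), eventually_ge_atTop 1] with k hk hk1 w i j
  have hw : maxAbsEntry (wordProd A w) ^ (k : ℝ)⁻¹ < c := by
    rw [← one_div]
    exact (le_ciSup (Finite.bddAbove_range _) w).trans_lt hk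
  rw [Real.rpow_inv_lt_iff_of_pos (maxAbsEntry_nonneg _) ((jsrApprox_nonneg A k).trans hk.le)
    (by positivity), Real.rpow_natCast] at hw
  exact (abs_le_maxAbsEntry _ i j).trans hw.le

lemma le_of_forall_abs_wordProd_le (hρ : Tendsto (jsrApprox A) atTop (𝓝 ρ)) {c C : ℝ}
    (hc : 0 ≤ c) (h : ∀ (k : ℕ) (w : Fin k → Fin p) (i j : ι), |wordProd A w i j| ≤ C * c ^ k) :
    ρ ≤ c := by
  set C' := max C 1
  have hC' : 0 < C' := lt_max_of_lt_right one_pos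
  have hbound : ∀ k : ℕ, 1 ≤ k → jsrApprox A k ≤ C' ^ ((1 : ℝ) / k) * c := by
    intro k hk
    refine Real.iSup_le (fun w => ?_) (by positivity)
    have hw : maxAbsEntry (wordProd A w) ≤ C' * c ^ k :=
      maxAbsEntry_le (by positivity) fun i j =>
        (h k w i j).trans (by gcongr; exact le_max_left _ _)
    calc maxAbsEntry (wordProd A w) ^ ((1 : ℝ) / k) ≤ (C' * c ^ k) ^ ((1 : ℝ) / k) := by
          gcongr
          exact maxAbsEntry_nonneg _
      _ = C' ^ ((1 : ℝ) / k) * c := by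
          rw [Real.mul_rpow hC'.le (by positivity), one_div,
            Real.pow_rpow_inv_natCast hc (by omega)]
  have hlim : Tendsto (fun k : ℕ => C' ^ ((1 : ℝ) / k) * c) atTop (𝓝 c) := by
    simpa using ((Real.continuousAt_const_rpow hC'.ne').tendsto.comp
      tendsto_one_div_atTop_nhds_zero_nat).mul_const c
  exact le_of_tendsto_of_tendsto hρ hlim (eventually_atTop.2 ⟨1, hbound⟩)

end JointSpectralRadius

section Majorant

variable {ι : Type*} [Fintype ι] [DecidableEq ι] {p : ℕ} (A : Fin p → Matrix ι ι ℝ) (c : ℝ)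
  (K : ℕ)

def entryMajorant (i : ι) : ℝ :=
  ⨆ x : (Σ k : Fin (K + 1), Fin k → Fin p) × ι, wordProd A x.1.2 x.2 i / c ^ (x.1.1 : ℕ)

variable {A c K}

lemma one_le_entryMajorant (i : ι) : 1 ≤ entryMajorant A c K i :=
  le_trans (by simp) (le_ciSup (Finite.bddAbove_range _) ((⟨0, Fin.elim0⟩, i) :
    (Σ k : Fin (K + 1), Fin k → Fin p) × ι))

lemma wordProd_div_pow_le_entryMajorant (hc : 0 < c)
    (hK : ∀ k, K ≤ k → ∀ (w : Fin k → Fin p) (t i : ι), wordProd A w t i ≤ c ^ k)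
    {k : ℕ} (w : Fin k → Fin p) (t i : ι) :
    wordProd A w t i / c ^ k ≤ entryMajorant A c K i := by
  rcases le_or_gt k K with hk | hk
  · exact le_ciSup (f := fun x : (Σ k : Fin (K + 1), Fin k → Fin p) × ι =>
      wordProd A x.1.2 x.2 i / c ^ (x.1.1 : ℕ)) (Finite.bddAbove_range _) (⟨⟨k, by omega⟩, w⟩, t)
  · exact ((div_le_one (by positivity)).2 (hK k hk.le w t i)).trans (one_le_entryMajorant i)

lemma vecMul_wordProd_entryMajorant_le (hA : ∀ a i j, 0 ≤ A a i j) (hc : 0 < c)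
    (hK : ∀ k, K ≤ k → ∀ (w : Fin k → Fin p) (t i : ι), wordProd A w t i ≤ c ^ k)
    {l : ℕ} (b : Fin l → Fin p) :
    entryMajorant A c K ᵥ* wordProd A b ≤ (Fintype.card ι * c ^ l) • entryMajorant A c K := by
  intro i
  have hterm (j : ι) :
      entryMajorant A c K j * wordProd A b j i ≤ c ^ l * entryMajorant A c K i := by
    rw [entryMajorant, Real.iSup_mul_of_nonneg (wordProd_nonneg hA b j i)]
    refine Real.iSup_le (fun ⟨⟨k, w⟩, t⟩ => ?_)
      (mul_nonneg (by positivity) (zero_le_one.trans (one_le_entryMajorant i)))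
    calc wordProd A w t j / c ^ (k : ℕ) * wordProd A b j i
        ≤ wordProd A (Fin.append w b) t i / c ^ (k : ℕ) := by
          rw [div_mul_eq_mul_div, wordProd_append]
          gcongr
          exact mul_le_vecMul_apply (wordProd_nonneg hA b) (wordProd_nonneg hA w t) j i
      _ = c ^ l * (wordProd A (Fin.append w b) t i / c ^ (k + l : ℕ)) := by
          rw [pow_add]
          field_simp
      _ ≤ c ^ l * entryMajorant A c K i := by
          gcongr
          exact wordProd_div_pow_le_entryMajorant hc hK _ t i
  calc (entryMajorant A c K ᵥ* wordProd A b) i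
        = ∑ j, entryMajorant A c K j * wordProd A b j i := rfl
    _ ≤ ∑ _j : ι, c ^ l * entryMajorant A c K i := Finset.sum_le_sum fun j _ => hterm j
    _ = ((Fintype.card ι * c ^ l) • entryMajorant A c K) i := by simp [mul_assoc]

end Majorant

section SubEigenvector

variable {σ ι : Type*} [Fintype ι] [DecidableEq ι] {p : ℕ} {A : Fin p → Matrix ι ι ℝ}
  {τ : σ → Fin p → σ} {U : σ → ι → ℝ} {c : ℝ}

lemma exists_vecMul_wordProd_le (hA : ∀ a i j, 0 ≤ A a i j) (hc : 0 ≤ c)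
    (hU : ∀ s a, U s ᵥ* A a ≤ c • U (τ s a)) :
    ∀ {k : ℕ} (w : Fin k → Fin p) (s : σ), ∃ s', U s ᵥ* wordProd A w ≤ c ^ k • U s'
  | 0, w, s => ⟨s, by simp⟩
  | k + 1, w, s => by
    obtain ⟨s', hs'⟩ := exists_vecMul_wordProd_le hA hc hU (Fin.init w) s
    refine ⟨τ s' (w (Fin.last k)), ?_⟩
    calc U s ᵥ* wordProd A w = U s ᵥ* wordProd A (Fin.init w) ᵥ* A (w (Fin.last k)) := by
          rw [wordProd_succ, vecMul_vecMul]
      _ ≤ (c ^ k • U s') ᵥ* A (w (Fin.last k)) := vecMul_le_vecMul_of_nonneg (hA _) hs'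
      _ = c ^ k • (U s' ᵥ* A (w (Fin.last k))) := smul_vecMul _ _ _
      _ ≤ c ^ k • c • U (τ s' (w (Fin.last k))) :=
          smul_le_smul_of_nonneg_left (hU _ _) (by positivity)
      _ = c ^ (k + 1) • U (τ s' (w (Fin.last k))) := by rw [smul_smul, pow_succ]

lemma exists_le_mul_of_pos {α : Type*} [Finite α] (f : α → ℝ) (hf : ∀ a, 0 < f a) :
    ∃ C, ∀ a b, f a ≤ C * f b :=
  ⟨⨆ x : α × α, f x.1 / f x.2, fun a b =>
    (div_le_iff₀ (hf b)).1
      (le_ciSup (Finite.bddAbove_range fun x : α × α => f x.1 / f x.2) (a, b))⟩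

lemma le_of_vecMul_le_smul [Finite σ] [Nonempty σ] {ρ : ℝ}
    (hρ : Tendsto (jsrApprox A) atTop (𝓝 ρ)) (hA : ∀ a i j, 0 ≤ A a i j) (hc : 0 ≤ c)
    (hUpos : ∀ s i, 0 < U s i) (hU : ∀ s a, U s ᵥ* A a ≤ c • U (τ s a)) : ρ ≤ c := by
  obtain ⟨C, hC⟩ := exists_le_mul_of_pos (Function.uncurry U) fun q => hUpos q.1 q.2
  obtain ⟨s⟩ := ‹Nonempty σ›
  refine le_of_forall_abs_wordProd_le hρ hc (C := C) fun k w j i => ?_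
  obtain ⟨s', hs'⟩ := exists_vecMul_wordProd_le hA hc hU w s
  rw [abs_of_nonneg (wordProd_nonneg hA w j i)]
  refine le_of_mul_le_mul_left ?_ (hUpos s j)
  calc U s j * wordProd A w j i ≤ (U s ᵥ* wordProd A w) i :=
        mul_le_vecMul_apply (wordProd_nonneg hA w) (fun t => (hUpos s t).le) j i
    _ ≤ c ^ k * U s' i := hs' i
    _ ≤ c ^ k * (C * U s j) := by gcongr; exact hC (s', i) (s, j)
    _ = U s j * (C * c ^ k) := by ring

end SubEigenvector

section DeBruijn

variable {d : ℕ}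

def suffix {α : Type*} (r : Fin d → α) (ℓ : Fin (d + 1)) : Fin ℓ → α :=
  fun t => r ⟨d - ℓ + t, by omega⟩

lemma suffix_last {α : Type*} (r : Fin d → α) : suffix r (Fin.last d) = r := by
  funext t
  simp [suffix]

variable {p : ℕ}

lemma suffix_deBruijnShift (r : Fin d → Fin p) (a : Fin p) (ℓ : Fin d) :
    suffix (deBruijnShift d r a) ℓ.succ = Fin.snoc (suffix r ℓ.castSucc) a := by
  funext t
  refine Fin.lastCases ?_ (fun t => ?_) t
  · simp only [suffix, deBruijnShift, Fin.snoc_last, Fin.val_last, Fin.val_succ]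
    exact dif_neg (by omega)
  · simp only [suffix, deBruijnShift, Fin.snoc_castSucc, Fin.val_castSucc, Fin.val_succ]
    rw [dif_pos (by omega)]
    exact congrArg r (Fin.ext (by dsimp only; omega))

variable {n : ℕ} {A : Fin p → Matrix (Fin n) (Fin n) ℝ}

lemma deBruijnOp_le_smul_iff {c : ℝ} {u : (Fin d → Fin p) × Fin n → ℝ} (hcu : 0 ≤ c • u) :
    deBruijnOp A d u ≤ c • u ↔
      ∀ r a, Function.curry u r ᵥ* A a ≤ c • Function.curry u (deBruijnShift d r a) := by
  constructor
  · intro h r a i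
    refine le_trans ?_ (h (deBruijnShift d r a, i))
    refine le_ciSup_of_le (Finite.bddAbove_range _) ⟨(r, a), rfl⟩ ?_
    rw [mulVec_transpose]
    rfl
  · rintro h ⟨s, i⟩
    refine Real.iSup_le ?_ (hcu _)
    rintro ⟨⟨r, a⟩, hra⟩
    dsimp only at hra ⊢
    subst hra
    rw [mulVec_transpose]
    exact h r a i

variable (A) in
def deBruijnVec (μ : ℝ) (v : Fin n → ℝ) (r : Fin d → Fin p) : Fin n → ℝ :=
  ∑ ℓ : Fin (d + 1), (μ ^ (ℓ : ℕ))⁻¹ • (v ᵥ* wordProd A (suffix r ℓ))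

variable {μ : ℝ} {v : Fin n → ℝ}

lemma deBruijnVec_eq_add (r : Fin d → Fin p) :
    deBruijnVec A μ v r =
      v + ∑ ℓ : Fin d, (μ ^ ((ℓ : ℕ) + 1))⁻¹ • (v ᵥ* wordProd A (suffix r ℓ.succ)) := by
  have h0 : wordProd A (suffix r 0) = 1 := wordProd_zero A _
  rw [deBruijnVec, Fin.sum_univ_succ, h0]
  simp

lemma le_deBruijnVec (hA : ∀ a i j, 0 ≤ A a i j) (hμ : 0 ≤ μ) (hv : 0 ≤ v)
    (r : Fin d → Fin p) : v ≤ deBruijnVec A μ v r := by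
  rw [deBruijnVec_eq_add]
  exact le_add_of_nonneg_right <| Finset.sum_nonneg fun ℓ _ =>
    smul_nonneg (by positivity) (vecMul_nonneg (wordProd_nonneg hA _) hv)

lemma deBruijnVec_vecMul_le (hμ : 0 < μ)
    (hvA : ∀ b : Fin (d + 1) → Fin p, v ᵥ* wordProd A b ≤ μ ^ (d + 1) • v)
    (r : Fin d → Fin p) (a : Fin p) :
    deBruijnVec A μ v r ᵥ* A a ≤ μ • deBruijnVec A μ v (deBruijnShift d r a) := by
  have hshift : ∀ ℓ : Fin d,
      (μ ^ (ℓ : ℕ))⁻¹ • (v ᵥ* wordProd A (Fin.snoc (suffix r ℓ.castSucc) a)) =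
        μ • (μ ^ ((ℓ : ℕ) + 1))⁻¹ •
          (v ᵥ* wordProd A (suffix (deBruijnShift d r a) ℓ.succ)) := by
    intro ℓ
    rw [suffix_deBruijnShift, smul_smul, pow_succ]
    congr 1
    field_simp
  have hlast : (μ ^ d)⁻¹ • (v ᵥ* wordProd A (Fin.snoc r a)) ≤ μ • v := by
    calc (μ ^ d)⁻¹ • (v ᵥ* wordProd A (Fin.snoc r a)) ≤ (μ ^ d)⁻¹ • μ ^ (d + 1) • v :=
          smul_le_smul_of_nonneg_left (hvA _) (by positivity)
      _ = μ • v := by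
          rw [smul_smul, pow_succ]
          congr 1
          field_simp
  rw [deBruijnVec, sum_vecMul, Fin.sum_univ_castSucc, deBruijnVec_eq_add, smul_add,
    add_comm (μ • v)]
  simp only [smul_vecMul, vecMul_vecMul, ← wordProd_snoc, Fin.val_castSucc, Fin.val_last,
    suffix_last, hshift, Finset.smul_sum]
  gcongr

lemma exists_deBruijnOp_le_smul (hA : ∀ a i j, 0 ≤ A a i j) (hμ : 0 < μ) (hv : ∀ i, 0 < v i)
    (hvA : ∀ b : Fin (d + 1) → Fin p, v ᵥ* wordProd A b ≤ μ ^ (d + 1) • v) :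
    ∃ u : (Fin d → Fin p) × Fin n → ℝ, (∀ q, 0 < u q) ∧ deBruijnOp A d u ≤ μ • u := by
  have hpos : ∀ q : (Fin d → Fin p) × Fin n, 0 < Function.uncurry (deBruijnVec A μ v) q :=
    fun ⟨r, i⟩ => (hv i).trans_le (le_deBruijnVec hA hμ.le (fun j => (hv j).le) r i)
  refine ⟨_, hpos, ?_⟩
  rw [deBruijnOp_le_smul_iff (smul_nonneg hμ.le fun q => (hpos q).le)]
  exact deBruijnVec_vecMul_le hμ hvA

end DeBruijn

section CollatzWielandt

variable {ι : Type*} [Fintype ι] {f : (ι → ℝ) → ι → ℝ}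

lemma cwRadius_le {c : ℝ} (hc : 0 ≤ c) {u : ι → ℝ} (hu : ∀ i, 0 < u i) (hfu : f u ≤ c • u) :
    cwRadius f ≤ c :=
  le_of_forall_gt_imp_ge_of_dense fun _ hc' => csInf_le ⟨0, fun _ hx => hx.1.le⟩
    ⟨hc.trans_lt hc', u, hu, hfu.trans (smul_le_smul_of_nonneg_right hc'.le fun i => (hu i).le)⟩

lemma le_cwRadius {x c : ℝ} (hc : 0 < c) {u : ι → ℝ} (hu : ∀ i, 0 < u i) (hfu : f u ≤ c • u)
    (h : ∀ c' (u' : ι → ℝ), 0 < c' → (∀ i, 0 < u' i) → f u' ≤ c' • u' → x ≤ c') :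
    x ≤ cwRadius f :=
  le_csInf ⟨c, hc, u, hu, hfu⟩ fun c' ⟨hc', u', hu', hfu'⟩ => h c' u' hc' hu' hfu'

end CollatzWielandt

section Bounds

variable {n p : ℕ} {A : Fin p → Matrix (Fin n) (Fin n) ℝ} {ρ : ℝ}

lemma le_of_deBruijnOp_le_smul (hρ : Tendsto (jsrApprox A) atTop (𝓝 ρ))
    (hA : ∀ a i j, 0 ≤ A a i j) (hp : 0 < p) {d : ℕ} {c : ℝ} (hc : 0 < c)
    {u : (Fin d → Fin p) × Fin n → ℝ} (hu : ∀ q, 0 < u q) (hTu : deBruijnOp A d u ≤ c • u) :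
    ρ ≤ c := by
  have : Nonempty (Fin p) := ⟨⟨0, hp⟩⟩
  rw [deBruijnOp_le_smul_iff (smul_nonneg hc.le fun q => (hu q).le)] at hTu
  exact le_of_vecMul_le_smul hρ hA hc.le (fun r i => hu (r, i)) hTu

lemma exists_deBruijnOp_le_smul_of_lt (hρ : Tendsto (jsrApprox A) atTop (𝓝 ρ))
    (hA : ∀ a i j, 0 ≤ A a i j) (hn : 0 < n) {c : ℝ} (hc : ρ < c) (d : ℕ) :
    ∃ u : (Fin d → Fin p) × Fin n → ℝ, (∀ q, 0 < u q) ∧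
      deBruijnOp A d u ≤ ((n : ℝ) ^ ((1 : ℝ) / (d + 1)) * c) • u := by
  have hc0 : 0 < c := (nonneg_of_tendsto_jsrApprox hρ).trans_lt hc
  obtain ⟨K, hK⟩ := eventually_atTop.1 (eventually_abs_wordProd_le hρ hc)
  have hμ : ((n : ℝ) ^ ((1 : ℝ) / (d + 1)) * c) ^ (d + 1) = n * c ^ (d + 1) := by
    rw [mul_pow, one_div, ← Nat.cast_succ, Real.rpow_inv_natCast_pow (by positivity) (by omega)]
  refine exists_deBruijnOp_le_smul (v := entryMajorant A c K) hA (by positivity)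
    (fun i => one_pos.trans_le (one_le_entryMajorant i)) fun b => ?_
  rw [hμ]
  simpa using vecMul_wordProd_entryMajorant_le hA hc0
    (fun k hk w t i => (le_abs_self _).trans (hK k hk w t i)) b

lemma cwRadius_deBruijnOp_le (hρ : Tendsto (jsrApprox A) atTop (𝓝 ρ))
    (hA : ∀ a i j, 0 ≤ A a i j) (hn : 0 < n) (d : ℕ) :
    cwRadius (deBruijnOp A d) ≤ (n : ℝ) ^ ((1 : ℝ) / (d + 1)) * ρ := by
  have hlt : ∀ c ∈ Set.Ioi ρ, cwRadius (deBruijnOp A d) ≤ (n : ℝ) ^ ((1 : ℝ) / (d + 1)) * c := by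
    intro c hc
    obtain ⟨u, hu, hTu⟩ := exists_deBruijnOp_le_smul_of_lt hρ hA hn hc d
    exact cwRadius_le (mul_nonneg (by positivity) ((nonneg_of_tendsto_jsrApprox hρ).trans hc.le))
      hu hTu
  exact ge_of_tendsto (((continuous_const_mul _).tendsto ρ).mono_left nhdsWithin_le_nhds)
    (eventually_nhdsWithin_of_forall hlt)

lemma le_cwRadius_deBruijnOp (hρ : Tendsto (jsrApprox A) atTop (𝓝 ρ))
    (hA : ∀ a i j, 0 ≤ A a i j) (hn : 0 < n) (hp : 0 < p) (d : ℕ) :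
    ρ ≤ cwRadius (deBruijnOp A d) := by
  obtain ⟨u, hu, hTu⟩ := exists_deBruijnOp_le_smul_of_lt hρ hA hn (lt_add_one ρ) d
  have hρ0 := nonneg_of_tendsto_jsrApprox hρ
  exact le_cwRadius (by positivity) hu hTu fun c u hc hu hTu =>
    le_of_deBruijnOp_le_smul hρ hA hp hc hu hTu

end Bounds

theorem cwRadius_deBruijnOp_le_and_tendsto_general {n p : ℕ} (hn : 0 < n) (hp : 0 < p)
    (A : Fin p → Matrix (Fin n) (Fin n) ℝ)
    (hA : ∀ a, ∀ i j, 0 ≤ A a i j)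
    (ρ : ℝ)
    (hρ : Tendsto (fun k : ℕ => ⨆ w : Fin k → Fin p,
        (⨆ i : Fin n, ⨆ j : Fin n, |((List.ofFn fun j => A (w j)).prod) i j|) ^ ((1 : ℝ) / k))
      atTop (nhds ρ)) :
    (∀ d : ℕ, cwRadius (deBruijnOp A d) ≤ (n : ℝ) ^ ((1 : ℝ) / (d + 1)) * ρ) ∧
    Tendsto (fun d : ℕ => cwRadius (deBruijnOp A d)) atTop (nhds ρ) := by
  change Tendsto (jsrApprox A) atTop (𝓝 ρ) at hρ
  have hupper := cwRadius_deBruijnOp_le hρ hA hn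
  refine ⟨hupper, tendsto_of_tendsto_of_tendsto_of_le_of_le tendsto_const_nhds ?_
    (le_cwRadius_deBruijnOp hρ hA hn hp) hupper⟩
  simpa using ((Real.continuousAt_const_rpow (Nat.cast_ne_zero.2 hn.ne')).tendsto.comp
    tendsto_one_div_add_atTop_nhds_zero_nat).mul_const ρ

/-- for a positively irreducible family of nonnegative matrices,
`r(T^d) ≤ n^{1/(d+1)} · ρ(𝒜)`, and in particular `r(T^d) → ρ(𝒜)` as `d → ∞`. -/
theorem cwRadius_deBruijnOp_le_and_tendsto {n p : ℕ} (hn : 0 < n) (hp : 0 < p)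
    (A : Fin p → Matrix (Fin n) (Fin n) ℝ)
    (hA : ∀ a, ∀ i j, 0 ≤ A a i j)
    (hirr : PosIrredFamily A)
    (ρ : ℝ)
    (hρ : Tendsto (fun k : ℕ => ⨆ w : Fin k → Fin p,
        (⨆ i : Fin n, ⨆ j : Fin n, |((List.ofFn fun j => A (w j)).prod) i j|) ^ ((1 : ℝ) / k))
      atTop (nhds ρ)) :
    (∀ d : ℕ, cwRadius (deBruijnOp A d) ≤ (n : ℝ) ^ ((1 : ℝ) / (d + 1)) * ρ) ∧
    Tendsto (fun d : ℕ => cwRadius (deBruijnOp A d)) atTop (nhds ρ) :=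
  cwRadius_deBruijnOp_le_and_tendsto_general hn hp A hA ρ hρ
end
end

section
/- The depth-d De Bruijn operator T^d on ∏_{s∈[p]^d} ℝ₊ⁿ is positively irreducible if and only if the family of lifted matrices { (e_r e_s^T) ⊗ A_a : r,s ∈ [p]^d, a ∈ [p], τ^d(r,a) = s } acting on ℝ^{p^d} ⊗ ℝⁿ ≅ ℝ^{p^d · n} is positively irreducible. -/
open Matrix

/-- The face of the nonnegative orthant of `ι → ℝ` associated with `I ⊆ ι`. -/
def orthantFace {ι : Type*} (I : Set ι) : Set (ι → ℝ) :=
  {x | 0 ≤ x ∧ ∀ i ∉ I, x i = 0}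

/-- The lifted matrix `(e_r e_sᵀ) ⊗ A_a` acting on `ℝ^{p^d} ⊗ ℝⁿ ≅ ℝ^{p^d · n}`. -/
def liftedMatrix {n p : ℕ} (A : Fin p → Matrix (Fin n) (Fin n) ℝ) (d : ℕ)
    (r s : Fin d → Fin p) (a : Fin p) :
    Matrix ((Fin d → Fin p) × Fin n) ((Fin d → Fin p) × Fin n) ℝ :=
  fun q q' => if q.1 = r ∧ q'.1 = s then A a q.2 q'.2 else 0

/-! `deBruijnOp A d` is the coordinatewise maximum of the nonnegative linear maps
`x ↦ Lᵀ x`, `L = liftedMatrix A d r (deBruijnShift d r a) a`, so it leaves a face invariant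
iff each of these maps does. A nonnegative `M` leaves the face of `J` invariant iff `M`
vanishes on `Jᶜ × J`; hence `Mᵀ` leaves the face of `J` invariant iff `M` leaves the face
of `Jᶜ` invariant, and `J ↦ Jᶜ` permutes the proper nonempty index sets. -/

open Set

theorem mulVec_nonneg_of_nonneg {ι : Type*} [Fintype ι] {M : Matrix ι ι ℝ}
    (hM : ∀ i j, 0 ≤ M i j) {x : ι → ℝ} (hx : 0 ≤ x) : 0 ≤ M *ᵥ x :=
  fun _ => Finset.sum_nonneg fun j _ => mul_nonneg (hM _ j) (hx j)

theorem Pi.single_one_mem_orthantFace {ι : Type*} [DecidableEq ι] {J : Set ι} {j : ι}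
    (hj : j ∈ J) : (Pi.single j 1 : ι → ℝ) ∈ orthantFace J :=
  ⟨Pi.single_nonneg.mpr zero_le_one,
    fun _ hi => Pi.single_eq_of_ne (ne_of_mem_of_not_mem hj hi).symm _⟩

theorem mapsTo_mulVec_orthantFace_iff {ι : Type*} [Fintype ι] {M : Matrix ι ι ℝ}
    (hM : ∀ i j, 0 ≤ M i j) (J : Set ι) :
    MapsTo (M *ᵥ ·) (orthantFace J) (orthantFace J) ↔ ∀ i ∉ J, ∀ j ∈ J, M i j = 0 := by
  classical
  constructor
  · intro h i hi j hj
    simpa [Matrix.mulVec_single] using (h (Pi.single_one_mem_orthantFace hj)).2 i hi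
  · intro h x hx
    refine ⟨mulVec_nonneg_of_nonneg hM hx.1, fun i hi => Finset.sum_eq_zero fun j _ => ?_⟩
    by_cases hj : j ∈ J
    · simp only [h i hi j hj, zero_mul]
    · rw [hx.2 j hj, mul_zero]

theorem mapsTo_transpose_mulVec_orthantFace_iff {ι : Type*} [Fintype ι]
    {M : Matrix ι ι ℝ} (hM : ∀ i j, 0 ≤ M i j) (J : Set ι) :
    MapsTo (Mᵀ *ᵥ ·) (orthantFace J) (orthantFace J) ↔
      MapsTo (M *ᵥ ·) (orthantFace Jᶜ) (orthantFace Jᶜ) := by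
  rw [mapsTo_mulVec_orthantFace_iff (M := Mᵀ) (fun i j => hM j i),
    mapsTo_mulVec_orthantFace_iff hM]
  simp only [mem_compl_iff, not_not, Matrix.transpose_apply]
  exact ⟨fun h i hi j hj => h j hj i hi, fun h i hi j hj => h j hj i hi⟩

theorem mapsTo_iSup_mulVec_orthantFace_iff {ι κ : Type*} [Fintype ι] [Finite κ]
    {M : κ → Matrix ι ι ℝ} (hM : ∀ k i j, 0 ≤ M k i j) (J : Set ι) :
    MapsTo (fun x i => ⨆ k, (M k *ᵥ x) i) (orthantFace J) (orthantFace J) ↔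
      ∀ k, MapsTo (M k *ᵥ ·) (orthantFace J) (orthantFace J) := by
  have hMx : ∀ {x}, x ∈ orthantFace J → ∀ k, 0 ≤ M k *ᵥ x :=
    fun hx k => mulVec_nonneg_of_nonneg (hM k) hx.1
  constructor
  · intro h k x hx
    refine ⟨hMx hx k, fun i hi => le_antisymm ?_ (hMx hx k i)⟩
    exact (h hx).2 i hi ▸ le_ciSup (f := fun k => (M k *ᵥ x) i) (finite_range _).bddAbove k
  · intro h x hx
    refine ⟨fun i => Real.iSup_nonneg fun k => hMx hx k i, fun i hi => ?_⟩
    exact le_antisymm (Real.iSup_le (fun k => ((h k hx).2 i hi).le) le_rfl)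
      (Real.iSup_nonneg fun k => hMx hx k i)

theorem Real.iSup_subtype_eq_iSup_ite {κ : Type*} [Finite κ] {P : κ → Prop} [DecidablePred P]
    {f : κ → ℝ} (hf : ∀ k, 0 ≤ f k) :
    ⨆ k : {k // P k}, f k = ⨆ k, if P k then f k else 0 := by
  have hite : ∀ k, 0 ≤ if P k then f k else 0 := fun k => by split_ifs <;> simp [hf]
  refine le_antisymm (Real.iSup_le (fun k => ?_) (Real.iSup_nonneg hite))
    (Real.iSup_le (fun k => ?_) (Real.iSup_nonneg fun k => hf k))
  · simpa [k.2] using le_ciSup (f := fun k => if P k then f k else 0) (finite_range _).bddAbove k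
  · split_ifs with hk
    · exact le_ciSup (f := fun k : {k // P k} => f k) (finite_range _).bddAbove ⟨k, hk⟩
    · exact Real.iSup_nonneg fun k => hf k

theorem Set.forall_nonempty_ne_univ_not_iff_of_compl {α : Type*} {P Q : Set α → Prop}
    (h : ∀ J, P J ↔ Q Jᶜ) :
    (∀ J : Set α, J.Nonempty → J ≠ univ → ¬ P J) ↔
      (∀ J : Set α, J.Nonempty → J ≠ univ → ¬ Q J) := by
  refine ⟨fun hP J hne hne' hQ => ?_, fun hQ J hne hne' hP => ?_⟩
  · exact hP Jᶜ (nonempty_compl.mpr hne') (compl_ne_univ.mpr hne)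
      ((h Jᶜ).mpr (by rwa [compl_compl]))
  · exact hQ Jᶜ (nonempty_compl.mpr hne') (compl_ne_univ.mpr hne) ((h J).mp hP)

section DeBruijn

variable {n p d : ℕ} {A : Fin p → Matrix (Fin n) (Fin n) ℝ}

theorem liftedMatrix_nonneg (hA : ∀ a i j, 0 ≤ A a i j) (r s : Fin d → Fin p) (a : Fin p) :
    ∀ q q', 0 ≤ liftedMatrix A d r s a q q' := fun q q' => by
  unfold liftedMatrix; split_ifs <;> simp [hA]

theorem transpose_liftedMatrix_mulVec_apply (r s : Fin d → Fin p) (a : Fin p)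
    (x : (Fin d → Fin p) × Fin n → ℝ) (q : (Fin d → Fin p) × Fin n) :
    ((liftedMatrix A d r s a)ᵀ *ᵥ x) q =
      if q.1 = s then ((A a)ᵀ *ᵥ fun j => x (r, j)) q.2 else 0 := by
  split_ifs with hq <;> simp [liftedMatrix, Matrix.mulVec, dotProduct, hq, Fintype.sum_prod_type]

theorem deBruijnOp_eq_iSup_liftedMatrix (hA : ∀ a i j, 0 ≤ A a i j)
    {x : (Fin d → Fin p) × Fin n → ℝ} (hx : 0 ≤ x) :
    deBruijnOp A d x =
      fun q => ⨆ ra : (Fin d → Fin p) × Fin p,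
        ((liftedMatrix A d ra.1 (deBruijnShift d ra.1 ra.2) ra.2)ᵀ *ᵥ x) q := by
  funext q
  simp only [deBruijnOp, transpose_liftedMatrix_mulVec_apply, eq_comm (a := q.1)]
  exact Real.iSup_subtype_eq_iSup_ite (κ := (Fin d → Fin p) × Fin p)
    (P := fun ra => deBruijnShift d ra.1 ra.2 = q.1)
    (f := fun ra => ((A ra.2)ᵀ *ᵥ fun j => x (ra.1, j)) q.2) fun ra =>
      mulVec_nonneg_of_nonneg (M := (A ra.2)ᵀ) (fun i j => hA ra.2 j i) (fun _ => hx _) q.2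

theorem mapsTo_deBruijnOp_orthantFace_iff (hA : ∀ a i j, 0 ≤ A a i j)
    (J : Set ((Fin d → Fin p) × Fin n)) :
    MapsTo (deBruijnOp A d) (orthantFace J) (orthantFace J) ↔
      ∀ r a, MapsTo ((liftedMatrix A d r (deBruijnShift d r a) a)ᵀ *ᵥ ·)
        (orthantFace J) (orthantFace J) :=
  (EqOn.mapsTo_iff fun _ hx => deBruijnOp_eq_iSup_liftedMatrix hA hx.1).trans <|
    (mapsTo_iSup_mulVec_orthantFace_iff
      (fun _ q q' => liftedMatrix_nonneg hA _ _ _ q' q) J).trans Prod.forall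

end DeBruijn

theorem deBruijnOp_posIrred_iff_lifted_family_general {n p : ℕ}
    (d : ℕ)
    (A : Fin p → Matrix (Fin n) (Fin n) ℝ)
    (hA : ∀ a, ∀ i j, 0 ≤ A a i j) :
    (∀ J : Set ((Fin d → Fin p) × Fin n), J.Nonempty → J ≠ Set.univ →
        ¬ (∀ x ∈ orthantFace J, deBruijnOp A d x ∈ orthantFace J)) ↔
    (∀ J : Set ((Fin d → Fin p) × Fin n), J.Nonempty → J ≠ Set.univ →
        ¬ (∀ (r s : Fin d → Fin p) (a : Fin p), deBruijnShift d r a = s →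
            ∀ x ∈ orthantFace J, (liftedMatrix A d r s a).mulVec x ∈ orthantFace J)) := by
  refine Set.forall_nonempty_ne_univ_not_iff_of_compl fun J => ?_
  change MapsTo _ _ _ ↔ ∀ r s a, deBruijnShift d r a = s → MapsTo _ _ _
  simp_rw [mapsTo_deBruijnOp_orthantFace_iff hA,
    mapsTo_transpose_mulVec_orthantFace_iff (liftedMatrix_nonneg hA _ _ _)]
  exact forall_congr' fun r => ⟨fun h s a hs => hs ▸ h a, fun h a => h _ a rfl⟩

/-- `T^d` is positively irreducible if and only if the family of
lifted matrices `{(e_r e_sᵀ) ⊗ A_a : τ^d(r,a) = s}` is positively irreducible. -/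
theorem deBruijnOp_posIrred_iff_lifted_family {n p : ℕ} (hn : 0 < n) (hp : 0 < p)
    (d : ℕ)
    (A : Fin p → Matrix (Fin n) (Fin n) ℝ)
    (hA : ∀ a, ∀ i j, 0 ≤ A a i j) :
    (∀ J : Set ((Fin d → Fin p) × Fin n), J.Nonempty → J ≠ Set.univ →
        ¬ (∀ x ∈ orthantFace J, deBruijnOp A d x ∈ orthantFace J)) ↔
    (∀ J : Set ((Fin d → Fin p) × Fin n), J.Nonempty → J ≠ Set.univ →
        ¬ (∀ (r s : Fin d → Fin p) (a : Fin p), deBruijnShift d r a = s →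
            ∀ x ∈ orthantFace J, (liftedMatrix A d r s a).mulVec x ∈ orthantFace J)) :=
  deBruijnOp_posIrred_iff_lifted_family_general d A hA
end
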